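/- arXiv:2002.08750 — 2 statements merged into one kernel-verified Lean document; each statement's English description precedes it below -/
import Mathlib

section
/- Suppose v(a₃) > 0, v(a₄) > 0 and v(a₆) > 0. Let x = u²x' + r, y = u³y' + u²sx' + t be a change of variables with r, s, t, u ∈ R and v(u) > 0, transforming E into a Weierstrass curve E' whose coefficients a₁', …, a₆' also lie in R. Let P = (x, y) be a point on E with v(x) > 0, and P' = (x', y') its image on E'. If v(φₙ(P)) ≤ v(ψₙ²(P)) for some n ≥ 1, then v(u²·φₙ'(P') + r·(ψₙ')²(P')) = v(u²·φₙ'(P')); equivalently, v(φₙ(P)) = (n² − 1)·v(u²) + v(u²·φₙ'(P')). -/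
open Polynomial
open scoped Polynomial.Bivariate

/-!
Under `x = u²x' + r`, `y = u³y' + u²sx' + t` the seeds `ψ₂`, `Ψ₃`, `preΨ₄` of the elliptic
divisibility sequence scale by `u³`, `u⁸`, `u¹²`, and the EDS recursion is homogeneous for these
weights, so `u ψₙ(P) = u^(n²) ψₙ'(P')` and `u² φₙ(P) = u^(2n²) (u² φₙ'(P') + r ψₙ'(P')²)`.
Cancelling the common power of `u`, the hypothesis reads `v(A + rQ) ≤ v(Q)` with
`A = u² φₙ'(P')` and `Q = ψₙ'(P')²`. If `v(A) < v(rQ)` the claim is the ultrametric equality;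
otherwise `v(rQ) ≤ v(A + rQ) ≤ v(Q)` forces `v(r) = 0`, hence `v(u²x') = v(x - r) = 0` and
`v(x') = -v(u²) < 0`. As `φₙ'(P') = Φₙ'(x')` with `Φₙ'` monic of degree `n²` and integral,
`v(A) = (1 - n²) v(u²)`, while the integrality of `ψₙ(P)² = ΨSqₙ(x)` gives
`v(Q) ≥ (1 - n²) v(u²)`. Thus `v(A) ≤ v(Q)`, and `v(A + rQ) = v(A)` again.
-/

lemma normEDS_weighted_scale {K : Type*} [Field K] {u : K} (hu : u ≠ 0) (b c d : K) (n : ℕ) :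
    u * normEDS (u ^ 3 * b) (u ^ 8 * c) (u ^ 12 * d) n = u ^ (n ^ 2) * normEDS b c d n := by
  have descale {a e : K} {k : ℕ} (h : u * a = u ^ k * e) : a = u ^ k * e / u :=
    eq_div_of_mul_eq hu ((mul_comm _ _).trans h)
  induction n using normEDSRec with
  | zero => simp
  | one => simp
  | two => simp only [Nat.cast_ofNat, normEDS_two, Nat.reducePow]; ring
  | three => simp only [Nat.cast_ofNat, normEDS_three, Nat.reducePow]; ring
  | four => simp only [Nat.cast_ofNat, normEDS_four, Nat.reducePow]; ring
  | even m h₁ h₂ h₃ h₄ h₅ =>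
    -- `normEDS_even` only determines `W(2m) * b`; for `b = 0` every even term vanishes
    by_cases hb : b = 0
    · simp [normEDS, hb, show Even (2 * ((m : ℤ) + 3)) from even_two_mul _]
    have scaled := normEDS_even (u ^ 3 * b) (u ^ 8 * c) (u ^ 12 * d) ((m : ℤ) + 3)
    have base := normEDS_even b c d ((m : ℤ) + 3)
    push_cast at h₁ h₂ h₃ h₄ h₅ ⊢
    rw [show (m : ℤ) + 3 - 1 = m + 2 by ring, show (m : ℤ) + 3 - 2 = m + 1 by ring,
      show (m : ℤ) + 3 + 2 = m + 5 by ring, show (m : ℤ) + 3 + 1 = m + 4 by ring] at scaled base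
    rw [eq_div_of_mul_eq (by simp [hu, hb]) scaled, eq_div_of_mul_eq hb base,
      descale h₁, descale h₂, descale h₃, descale h₄, descale h₅]
    field_simp
    ring
  | odd m h₁ h₂ h₃ h₄ =>
    have scaled := normEDS_odd (u ^ 3 * b) (u ^ 8 * c) (u ^ 12 * d) ((m : ℤ) + 2)
    have base := normEDS_odd b c d ((m : ℤ) + 2)
    push_cast at h₁ h₂ h₃ h₄ ⊢
    rw [show (m : ℤ) + 2 - 1 = m + 1 by ring, show (m : ℤ) + 2 + 2 = m + 4 by ring,
      show (m : ℤ) + 2 + 1 = m + 3 by ring] at scaled base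
    rw [scaled, base, descale h₁, descale h₂, descale h₃, descale h₄]
    field_simp
    ring

namespace WeierstrassCurve

section Evaluation

variable {R : Type*} [CommRing R] {W : WeierstrassCurve R}

lemma evalEval_ψ (x y : R) (n : ℤ) :
    (W.ψ n).evalEval x y = normEDS (W.ψ₂.evalEval x y) (W.Ψ₃.eval x) (W.preΨ₄.eval x) n := by
  rw [WeierstrassCurve.ψ, ← coe_evalEvalRingHom, map_normEDS]
  simp

lemma evalEval_eq_eval_of_mk_eq {p : R[X][Y]} {q : R[X]}
    (h : Affine.CoordinateRing.mk W p = Affine.CoordinateRing.mk W (C q)) {x y : R}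
    (hxy : W.toAffine.Equation x y) : p.evalEval x y = q.eval x := by
  obtain ⟨f, hf⟩ := AdjoinRoot.mk_eq_mk.mp h
  have := congrArg (evalEval x y) hf
  rwa [evalEval_sub, evalEval_mul, hxy, zero_mul, sub_eq_zero, evalEval_C] at this

lemma evalEval_φ_eq_eval_Φ {x y : R} (hxy : W.toAffine.Equation x y) (n : ℤ) :
    (W.φ n).evalEval x y = (W.Φ n).eval x :=
  evalEval_eq_eval_of_mk_eq (Affine.CoordinateRing.mk_φ W n) hxy

lemma evalEval_ψ_sq {x y : R} (hxy : W.toAffine.Equation x y) (n : ℤ) :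
    (W.ψ n).evalEval x y ^ 2 = (W.ΨSq n).eval x := by
  rw [← evalEval_pow]
  refine evalEval_eq_eval_of_mk_eq ?_ hxy
  rw [map_pow, Affine.CoordinateRing.mk_ψ, Affine.CoordinateRing.mk_Ψ_sq]

end Evaluation

section Integrality

variable {R : Type*} [CommRing R] {S : Subring R} {W : WeierstrassCurve R}
  (h₁ : W.a₁ ∈ S) (h₂ : W.a₂ ∈ S) (h₃ : W.a₃ ∈ S) (h₄ : W.a₄ ∈ S) (h₆ : W.a₆ ∈ S)
include h₁ h₂ h₃ h₄ h₆

lemma exists_map_subtype_eq : ∃ W₀ : WeierstrassCurve S, W₀.map S.subtype = W :=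
  ⟨⟨⟨_, h₁⟩, ⟨_, h₂⟩, ⟨_, h₃⟩, ⟨_, h₄⟩, ⟨_, h₆⟩⟩, rfl⟩

lemma coeff_Φ_mem (n : ℤ) (k : ℕ) : (W.Φ n).coeff k ∈ S := by
  obtain ⟨W₀, rfl⟩ := exists_map_subtype_eq h₁ h₂ h₃ h₄ h₆
  rw [map_Φ, coeff_map]
  exact ((W₀.Φ n).coeff k).2

lemma eval_ΨSq_mem (n : ℤ) {x : R} (hx : x ∈ S) : (W.ΨSq n).eval x ∈ S := by
  obtain ⟨W₀, rfl⟩ := exists_map_subtype_eq h₁ h₂ h₃ h₄ h₆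
  rw [map_ΨSq, show x = S.subtype ⟨x, hx⟩ from rfl, eval_map_apply]
  exact ((W₀.ΨSq n).eval _).2

end Integrality

section VariableChange

variable {K : Type*} [Field K] (W : WeierstrassCurve K) (C : VariableChange K) (x' y' : K)

lemma evalEval_polynomial_variableChange :
    W.toAffine.polynomial.evalEval (C.u ^ 2 * x' + C.r) (C.u ^ 3 * y' + C.u ^ 2 * C.s * x' + C.t)
      = C.u ^ 6 * (C • W).toAffine.polynomial.evalEval x' y' := by
  simp only [Affine.evalEval_polynomial, variableChange_a₁, variableChange_a₂, variableChange_a₃,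
    variableChange_a₄, variableChange_a₆, Units.val_inv_eq_inv_val]
  field_simp
  ring

lemma equation_variableChange_iff :
    W.toAffine.Equation (C.u ^ 2 * x' + C.r) (C.u ^ 3 * y' + C.u ^ 2 * C.s * x' + C.t) ↔
      (C • W).toAffine.Equation x' y' := by
  simp only [Affine.Equation, evalEval_polynomial_variableChange, mul_eq_zero, pow_eq_zero_iff',
    Units.ne_zero, false_and, false_or]

lemma evalEval_ψ₂_variableChange :
    W.ψ₂.evalEval (C.u ^ 2 * x' + C.r) (C.u ^ 3 * y' + C.u ^ 2 * C.s * x' + C.t)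
      = C.u ^ 3 * (C • W).ψ₂.evalEval x' y' := by
  simp only [ψ₂, Affine.polynomialY, variableChange_a₁, variableChange_a₃, Units.val_inv_eq_inv_val,
    evalEval, eval_add, eval_mul, eval_C, eval_X]
  field_simp
  ring

lemma eval_Ψ₃_variableChange :
    W.Ψ₃.eval (C.u ^ 2 * x' + C.r) = C.u ^ 8 * (C • W).Ψ₃.eval x' := by
  simp only [Ψ₃, variableChange_b₂, variableChange_b₄, variableChange_b₆, variableChange_b₈,
    Units.val_inv_eq_inv_val, eval_add, eval_mul, eval_C, eval_X, eval_ofNat, eval_pow]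
  field_simp
  ring

lemma eval_preΨ₄_variableChange :
    W.preΨ₄.eval (C.u ^ 2 * x' + C.r) = C.u ^ 12 * (C • W).preΨ₄.eval x' := by
  simp only [preΨ₄, variableChange_b₂, variableChange_b₄, variableChange_b₆, variableChange_b₈,
    Units.val_inv_eq_inv_val, eval_add, eval_mul, eval_C, eval_X, eval_ofNat, eval_pow]
  field_simp
  -- the only seed identity that needs the relation `4 b₈ = b₂ b₆ - b₄²`
  linear_combination (2 * C.u ^ 2 * x' * C.r + C.r ^ 2) * W.b_relation

lemma evalEval_ψ_variableChange (n : ℕ) :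
    C.u * (W.ψ n).evalEval (C.u ^ 2 * x' + C.r) (C.u ^ 3 * y' + C.u ^ 2 * C.s * x' + C.t)
      = C.u ^ (n ^ 2) * ((C • W).ψ n).evalEval x' y' := by
  rw [evalEval_ψ, evalEval_ψ, evalEval_ψ₂_variableChange, eval_Ψ₃_variableChange,
    eval_preΨ₄_variableChange, normEDS_weighted_scale C.u.ne_zero]

lemma evalEval_φ_variableChange (n : ℕ) :
    C.u ^ 2 * (W.φ n).evalEval (C.u ^ 2 * x' + C.r) (C.u ^ 3 * y' + C.u ^ 2 * C.s * x' + C.t)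
      = C.u ^ (2 * n ^ 2) * (C.u ^ 2 * ((C • W).φ n).evalEval x' y'
        + C.r * ((C • W).ψ n).evalEval x' y' ^ 2) := by
  rcases n with _ | m
  · simp
  have descale (k : ℕ) :
      (W.ψ k).evalEval (C.u ^ 2 * x' + C.r) (C.u ^ 3 * y' + C.u ^ 2 * C.s * x' + C.t)
        = C.u ^ (k ^ 2) * ((C • W).ψ k).evalEval x' y' / C.u :=
    eq_div_of_mul_eq C.u.ne_zero ((mul_comm _ _).trans (evalEval_ψ_variableChange W C x' y' k))
  have hsucc : ((m + 1 : ℕ) : ℤ) + 1 = ((m + 2 : ℕ) : ℤ) := by push_cast; ring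
  have hpred : ((m + 1 : ℕ) : ℤ) - 1 = (m : ℤ) := by push_cast; ring
  simp only [WeierstrassCurve.φ, evalEval_sub, evalEval_mul, evalEval_pow, evalEval_C, eval_X,
    hsucc, hpred, descale]
  field_simp
  ring

end VariableChange

end WeierstrassCurve

namespace AddValuation

def ofTopIff {K : Type*} [Field K] (v : K → WithTop ℤ) (hv_top : ∀ z : K, v z = ⊤ ↔ z = 0)
    (hv_mul : ∀ z w : K, v (z * w) = v z + v w)
    (hv_add : ∀ z w : K, min (v z) (v w) ≤ v (z + w)) : AddValuation K (WithTop ℤ) :=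
  of v ((hv_top 0).mpr rfl) (by
    have h := hv_mul 1 1
    rw [mul_one] at h
    lift v 1 to ℤ using fun h => one_ne_zero ((hv_top 1).mp h) with a
    have : a = a + a := by exact_mod_cast h
    simp [show a = 0 by omega]) hv_add hv_mul

variable {K : Type*} [Field K] (v : AddValuation K (WithTop ℤ))

lemma map_eval_of_monic_of_neg {p : K[X]} (hp : p.Monic) (hcoeff : ∀ k, 0 ≤ v (p.coeff k))
    {z : K} (hz : v z < 0) : v (p.eval z) = p.natDegree • v z := by
  obtain ⟨ξ, hξ⟩ := WithTop.ne_top_iff_exists.mp hz.ne_top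
  have hξneg : ξ < 0 := by rw [← hξ] at hz; exact_mod_cast hz
  have hlower : ∀ i < p.natDegree, p.natDegree • v z < v (p.coeff i * z ^ i) := by
    intro i hi
    rw [v.map_mul, v.map_pow, ← hξ]
    refine lt_of_lt_of_le ?_ (le_add_of_nonneg_left (hcoeff i))
    rw [← WithTop.coe_nsmul, ← WithTop.coe_nsmul, WithTop.coe_lt_coe, nsmul_eq_mul, nsmul_eq_mul]
    exact mul_lt_mul_of_neg_right (by exact_mod_cast hi) hξneg
  have hfinite : p.natDegree • v z ≠ ⊤ := by
    rw [← hξ, ← WithTop.coe_nsmul]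
    exact WithTop.coe_ne_top
  rw [eval_eq_sum_range, Finset.sum_range_succ, hp.coeff_natDegree, one_mul, add_comm,
    ← v.map_pow]
  exact v.map_add_eq_of_lt_left
    (v.map_pow z _ ▸ v.map_lt_sum hfinite fun i hi => hlower i (Finset.mem_range.mp hi))

lemma map_mul_eval_le_of_monic {p : K[X]} (hp : p.Monic) (hcoeff : ∀ k, 0 ≤ v (p.coeff k))
    {c z q : K} (hc : 0 < v c) (hcz : v (c * z) = 0) (hq : v c ≤ v (c ^ p.natDegree * q)) :
    v (c * p.eval z) ≤ v q := by
  have hc0 : c ≠ 0 := by rintro rfl; simp at hcz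
  rw [v.map_mul] at hcz
  have hz : v z < 0 := by
    by_contra! h
    exact (add_pos_of_pos_of_nonneg hc h).ne' hcz
  rw [v.map_mul] at hq
  refine (WithTop.add_le_add_iff_left (v.ne_top_iff.mpr (pow_ne_zero p.natDegree hc0))).mp ?_
  calc v (c ^ p.natDegree) + v (c * p.eval z)
      = v c + p.natDegree • (v c + v z) := by
        rw [v.map_mul, v.map_pow, map_eval_of_monic_of_neg v hp hcoeff hz, nsmul_add]; abel
    _ = v c := by rw [hcz, nsmul_zero, add_zero]
    _ ≤ v (c ^ p.natDegree) + v q := hq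

lemma map_add_mul_eq_left {a q r : K} (hr : 0 ≤ v r) (hle : v (a + r * q) ≤ v q)
    (hunit : v r = 0 → v a ≤ v q) : v (a + r * q) = v a := by
  rcases lt_or_ge (v a) (v (r * q)) with hlt | hge
  · exact v.map_add_eq_of_lt_left hlt
  rcases eq_or_ne q 0 with rfl | hq0
  · simp
  have hq : v q ≤ v (r * q) := by rw [v.map_mul]; exact le_add_of_nonneg_left hr
  have hrq : v (r * q) ≤ v (a + r * q) := min_eq_right hge ▸ v.map_add a (r * q)
  have hvr : v r = 0 := by
    refine (WithTop.add_left_inj (v.ne_top_iff.mpr hq0)).mp ?_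
    rw [add_zero, add_comm, ← v.map_mul]
    exact le_antisymm (hrq.trans hle) hq
  exact le_antisymm (hle.trans (hq.trans hge)) ((hunit hvr).trans (hq.trans hrq))

end AddValuation

namespace WeierstrassCurve

variable {K : Type*} [Field K] (v : AddValuation K (WithTop ℤ)) {W : WeierstrassCurve K}
  (h₁ : 0 ≤ v W.a₁) (h₂ : 0 ≤ v W.a₂) (h₃ : 0 ≤ v W.a₃) (h₄ : 0 ≤ v W.a₄) (h₆ : 0 ≤ v W.a₆)
  {x y : K} (hxy : W.toAffine.Equation x y)
include h₁ h₂ h₃ h₄ h₆ hxy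

lemma map_evalEval_ψ_sq_nonneg (hx : 0 ≤ v x) (n : ℤ) : 0 ≤ v ((W.ψ n).evalEval x y ^ 2) := by
  rw [evalEval_ψ_sq hxy]
  -- membership in `v.toValuation.integer` unfolds to `0 ≤ v z`
  exact eval_ΨSq_mem (S := v.toValuation.integer) h₁ h₂ h₃ h₄ h₆ n hx

lemma map_mul_evalEval_φ_le (n : ℕ) {c q : K} (hc : 0 < v c) (hcx : v (c * x) = 0)
    (hq : v c ≤ v (c ^ (n ^ 2) * q)) : v (c * (W.φ n).evalEval x y) ≤ v q := by
  rw [evalEval_φ_eq_eval_Φ hxy]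
  refine v.map_mul_eval_le_of_monic (W.leadingCoeff_Φ n)
    (coeff_Φ_mem (S := v.toValuation.integer) h₁ h₂ h₃ h₄ h₆ n) hc hcx ?_
  rwa [natDegree_Φ, Int.natAbs_natCast]

end WeierstrassCurve

theorem greatest_common_valuation_stmt_5_general {K : Type*} [Field K]
    (v : K → WithTop ℤ)
    (hv_top : ∀ z : K, v z = ⊤ ↔ z = 0)
    (hv_mul : ∀ z w : K, v (z * w) = v z + v w)
    (hv_add : ∀ z w : K, min (v z) (v w) ≤ v (z + w))
    (W : WeierstrassCurve K)
    (ha₁ : 0 ≤ v W.a₁) (ha₂ : 0 ≤ v W.a₂) (ha₃ : 0 < v W.a₃)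
    (ha₄ : 0 < v W.a₄) (ha₆ : 0 < v W.a₆)
    (u : Kˣ) (r s t : K)
    (hr : 0 ≤ v r)
    (hu : 0 < v (u : K))
    (W' : WeierstrassCurve K) (hW' : W' = (⟨u, r, s, t⟩ : WeierstrassCurve.VariableChange K) • W)
    (ha₁' : 0 ≤ v W'.a₁) (ha₂' : 0 ≤ v W'.a₂) (ha₃' : 0 ≤ v W'.a₃)
    (ha₄' : 0 ≤ v W'.a₄) (ha₆' : 0 ≤ v W'.a₆)
    (x y x' y' : K)
    (hx : x = (u : K) ^ 2 * x' + r)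
    (hy : y = (u : K) ^ 3 * y' + (u : K) ^ 2 * s * x' + t)
    (hP : W.toAffine.Equation x y)
    (hvx : 0 < v x)
    (n : ℕ) (hn : 1 ≤ n)
    (hle : v ((W.φ n).evalEval x y) ≤ v ((W.ψ n).evalEval x y ^ 2)) :
    v ((u : K) ^ 2 * (W'.φ n).evalEval x' y' + r * (W'.ψ n).evalEval x' y' ^ 2) =
      v ((u : K) ^ 2 * (W'.φ n).evalEval x' y') ∧
    v ((W.φ n).evalEval x y) =
      (n ^ 2 - 1) • v ((u : K) ^ 2) + v ((u : K) ^ 2 * (W'.φ n).evalEval x' y') := by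
  obtain ⟨w, rfl⟩ : ∃ w : AddValuation K (WithTop ℤ), ⇑w = v :=
    ⟨AddValuation.ofTopIff v hv_top hv_mul hv_add, rfl⟩
  have hP' := (W.equation_variableChange_iff ⟨u, r, s, t⟩ x' y').mp (hx ▸ hy ▸ hP)
  have hφ := W.evalEval_φ_variableChange ⟨u, r, s, t⟩ x' y' n
  have hψ := W.evalEval_ψ_variableChange ⟨u, r, s, t⟩ x' y' n
  dsimp only at hP' hφ hψ
  rw [← hW'] at hP'
  rw [← hW', ← hx, ← hy, pow_mul] at hφ
  rw [← hW', ← hx, ← hy] at hψ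
  replace hψ : (u : K) ^ 2 * (W.ψ n).evalEval x y ^ 2 =
      ((u : K) ^ 2) ^ (n ^ 2) * (W'.ψ n).evalEval x' y' ^ 2 := by
    rw [← mul_pow, hψ]; ring
  have hu2 : w ((u : K) ^ 2) ≠ ⊤ := w.ne_top_iff.mpr (pow_ne_zero 2 u.ne_zero)
  have hle' : w ((u : K) ^ 2 * (W'.φ n).evalEval x' y' + r * (W'.ψ n).evalEval x' y' ^ 2) ≤
      w ((W'.ψ n).evalEval x' y' ^ 2) := by
    have := add_le_add_right hle (w ((u : K) ^ 2))
    rwa [← w.map_mul, ← w.map_mul, hφ, hψ, w.map_mul, w.map_mul,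
      WithTop.add_le_add_iff_left (w.ne_top_iff.mpr (by simp))] at this
  have hA := w.map_add_mul_eq_left hr hle' fun hr0 => by
    have hx' : w ((u : K) ^ 2 * x') = 0 := by
      rw [show (u : K) ^ 2 * x' = x - r by rw [hx]; ring, w.map_sub_eq_of_lt_right (hr0 ▸ hvx), hr0]
    refine W'.map_mul_evalEval_φ_le w ha₁' ha₂' ha₃' ha₄' ha₆' hP' n
      (by rw [w.map_pow]; exact nsmul_pos hu two_ne_zero) hx' ?_
    rw [← hψ, w.map_mul]
    exact le_add_of_nonneg_right
      (W.map_evalEval_ψ_sq_nonneg w ha₁ ha₂ ha₃.le ha₄.le ha₆.le hP hvx.le n)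
  refine ⟨hA, (WithTop.add_left_inj hu2).mp ?_⟩
  rw [← w.map_mul, hφ, w.map_mul, hA, w.map_pow, ← add_assoc, ← succ_nsmul',
    Nat.sub_add_cancel (Nat.one_le_pow _ _ hn)]

/-- Let `K` be a field with a normalised discrete valuation `v` (a finite extension of `ℚ_p`),
with ring of integers `R = {z : 0 ≤ v z}` and uniformiser `π`, and let `E/K` be a Weierstrass
curve with coefficients in `R` satisfying `v(a₃) > 0`, `v(a₄) > 0`, `v(a₆) > 0`.  Let
`x = u²x' + r`, `y = u³y' + u²sx' + t` be a change of variables with `r, s, t, u ∈ R` and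
`v(u) > 0`, transforming `E` into a Weierstrass curve `E'` whose coefficients also lie in `R`.
Let `P = (x, y)` be a point on `E` with `v(x) > 0` and `P' = (x', y')` its image on `E'`.
If `v(φₙ(P)) ≤ v(ψₙ²(P))` for some `n ≥ 1`, then
`v(u²·φₙ'(P') + r·(ψₙ')²(P')) = v(u²·φₙ'(P'))`; equivalently,
`v(φₙ(P)) = (n² − 1)·v(u²) + v(u²·φₙ'(P'))`. -/
theorem greatest_common_valuation_stmt_5 {K : Type*} [Field K]
    (v : K → WithTop ℤ)
    (hv_top : ∀ z : K, v z = ⊤ ↔ z = 0)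
    (hv_mul : ∀ z w : K, v (z * w) = v z + v w)
    (hv_add : ∀ z w : K, min (v z) (v w) ≤ v (z + w))
    (π : K) (hπ : v π = 1)
    (W : WeierstrassCurve K)
    (ha₁ : 0 ≤ v W.a₁) (ha₂ : 0 ≤ v W.a₂) (ha₃ : 0 < v W.a₃)
    (ha₄ : 0 < v W.a₄) (ha₆ : 0 < v W.a₆)
    (u : Kˣ) (r s t : K)
    (hr : 0 ≤ v r) (hs : 0 ≤ v s) (ht : 0 ≤ v t)
    (hu : 0 < v (u : K))
    (W' : WeierstrassCurve K) (hW' : W' = (⟨u, r, s, t⟩ : WeierstrassCurve.VariableChange K) • W)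
    (ha₁' : 0 ≤ v W'.a₁) (ha₂' : 0 ≤ v W'.a₂) (ha₃' : 0 ≤ v W'.a₃)
    (ha₄' : 0 ≤ v W'.a₄) (ha₆' : 0 ≤ v W'.a₆)
    (x y x' y' : K)
    (hx : x = (u : K) ^ 2 * x' + r)
    (hy : y = (u : K) ^ 3 * y' + (u : K) ^ 2 * s * x' + t)
    (hP : W.toAffine.Equation x y)
    (hvx : 0 < v x)
    (n : ℕ) (hn : 1 ≤ n)
    (hle : v ((W.φ n).evalEval x y) ≤ v ((W.ψ n).evalEval x y ^ 2)) :
    v ((u : K) ^ 2 * (W'.φ n).evalEval x' y' + r * (W'.ψ n).evalEval x' y' ^ 2) =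
      v ((u : K) ^ 2 * (W'.φ n).evalEval x' y') ∧
    v ((W.φ n).evalEval x y) =
      (n ^ 2 - 1) • v ((u : K) ^ 2) + v ((u : K) ^ 2 * (W'.φ n).evalEval x' y') :=
  greatest_common_valuation_stmt_5_general v hv_top hv_mul hv_add W ha₁ ha₂ ha₃ ha₄ ha₆ u r s t hr
    hu W' hW' ha₁' ha₂' ha₃' ha₄' ha₆' x y x' y' hx hy hP hvx n hn hle
end

section
/- Suppose v(2) > 0 and let k ≥ 1 be an integer (corresponding to Kodaira type I_m^* with m = 2k − 1 odd and residue characteristic 2). Assume v(a₁) ≥ 1, v(a₂) = 1, v(a₃) = k + 1, v(a₄) ≥ k + 2 and v(a₆) ≥ 2k + 2. Let P = (x, y) be a point on E with v(x) > 0 satisfying the Weierstrass equation. Then: (a) if v(x) = 1, then v(φ₂(P)) = v(ψ₃(P)) = 4 and v(ψ₂²(P)) ≥ 4; (b) the range 1 < v(x) < k + 1 is impossible for a point with v(y) > 0; (c) if v(x) ≥ k + 1, then v(φ₂(P)) = v(ψ₃(P)) = 2k + 3 (= m + 4) and v(ψ₂²(P)) = 2k + 2 (= m + 3). -/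
open Polynomial

/-!
From the hypotheses on the `aᵢ` one reads off `v(b₂) ≥ 2`, `v(b₄) ≥ k + 2`, `v(b₆) = 2k + 2`
(from `a₃²`) and `v(b₈) = 2k + 3` (from `a₂a₃²`). Each of `φ₂`, `ψ₃`, `ψ₂²` is then dominated by a
single monomial: the `x⁴` term when `v(x) = 1` (its coefficient `1` or `3` is a unit since
`v(2) > 0`), and the constant term when `v(x) ≥ k + 1`. For `1 < v(x) = n < k + 1` the right-hand
side of the Weierstrass equation has odd valuation `2n + 1`, coming from `a₂x²`, whereas the
left-hand side has valuation `2v(y)` if `v(y) ≤ n` and at least `2n + 2` otherwise.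
-/

theorem WithTop.coe_add_one_le_of_lt {a : ℤ} {t : WithTop ℤ} (h : (a : WithTop ℤ) < t) :
    ((a + 1 : ℤ) : WithTop ℤ) ≤ t := by
  induction t using WithTop.recTopCoe with
  | top => exact le_top
  | coe n => exact WithTop.coe_le_coe.2 (WithTop.coe_lt_coe.1 h)

theorem map_one_eq_zero_of_map_mul {M : Type*} [MulOneClass M] {v : M → WithTop ℤ}
    (h₁ : v 1 ≠ ⊤) (hmul : ∀ z w, v (z * w) = v z + v w) : v 1 = 0 := by
  obtain ⟨n, hn⟩ := WithTop.ne_top_iff_exists.1 h₁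
  have h := hmul 1 1
  rw [mul_one, ← hn, ← WithTop.coe_add, WithTop.coe_inj] at h
  rw [← hn, show n = 0 by omega, WithTop.coe_zero]

namespace AddValuation

variable {R : Type*} [Ring R] (v : AddValuation R (WithTop ℤ)) {x y : R} {a b c : ℤ}

theorem coe_le_map_mul (hx : (a : WithTop ℤ) ≤ v x) (hy : (b : WithTop ℤ) ≤ v y)
    (h : c ≤ a + b) : (c : WithTop ℤ) ≤ v (x * y) := by
  rw [v.map_mul]
  exact (WithTop.coe_le_coe.2 h).trans (WithTop.coe_add a b ▸ add_le_add hx hy)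

theorem coe_le_map_pow (n : ℕ) (hx : (a : WithTop ℤ) ≤ v x) (h : c ≤ n * a) :
    (c : WithTop ℤ) ≤ v (x ^ n) := by
  rw [v.map_pow]
  rw [← nsmul_eq_mul] at h
  exact (WithTop.coe_le_coe.2 h).trans (WithTop.coe_nsmul a n ▸ nsmul_le_nsmul_right hx n)

theorem map_mul_eq_coe (hx : v x = a) (hy : v y = b) (h : a + b = c) : v (x * y) = c := by
  rw [v.map_mul, hx, hy, ← h, WithTop.coe_add]

theorem map_pow_eq_coe (n : ℕ) (hx : v x = a) (h : n * a = c) : v (x ^ n) = c := by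
  rw [v.map_pow, hx, ← h, ← nsmul_eq_mul, WithTop.coe_nsmul]

theorem map_add_eq_of_add_one_le (hx : v x = a) (hy : ((a + 1 : ℤ) : WithTop ℤ) ≤ v y) :
    v (x + y) = a := by
  rw [v.map_add_eq_of_lt_left (hx ▸ (WithTop.coe_lt_coe.2 (lt_add_one a)).trans_le hy), hx]

theorem map_sub_eq_of_add_one_le (hx : v x = a) (hy : ((a + 1 : ℤ) : WithTop ℤ) ≤ v y) :
    v (x - y) = a := by
  rw [sub_eq_add_neg]
  exact v.map_add_eq_of_add_one_le hx (by rwa [v.map_neg])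

end AddValuation

namespace WeierstrassCurve

variable {R : Type*} [CommRing R]

theorem eval_Φ_two (W : WeierstrassCurve R) (x : R) :
    (W.Φ 2).eval x = x ^ 4 - W.b₄ * x ^ 2 - 2 * W.b₆ * x - W.b₈ := by
  simp [Φ_two]

theorem eval_Ψ₃ (W : WeierstrassCurve R) (x : R) :
    W.Ψ₃.eval x = 3 * x ^ 4 + W.b₂ * x ^ 3 + 3 * W.b₄ * x ^ 2 + 3 * W.b₆ * x + W.b₈ := by
  simp [Ψ₃]

theorem eval_Ψ₂Sq (W : WeierstrassCurve R) (x : R) :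
    W.Ψ₂Sq.eval x = 4 * x ^ 3 + W.b₂ * x ^ 2 + 2 * W.b₄ * x + W.b₆ := by
  simp [Ψ₂Sq]

/-- The shape of a Weierstrass equation of Kodaira type `I*_{2k-1}` in residue characteristic `2`,
as produced by Tate's algorithm. -/
structure IsIStarOddNormalForm (v : AddValuation R (WithTop ℤ)) (k : ℤ) (W : WeierstrassCurve R) :
    Prop where
  val_two_pos : 0 < v 2
  one_le : 1 ≤ k
  val_a₁ : ((1 : ℤ) : WithTop ℤ) ≤ v W.a₁
  val_a₂ : v W.a₂ = ((1 : ℤ) : WithTop ℤ)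
  val_a₃ : v W.a₃ = ((k + 1 : ℤ) : WithTop ℤ)
  val_a₄ : ((k + 2 : ℤ) : WithTop ℤ) ≤ v W.a₄
  val_a₆ : ((2 * k + 2 : ℤ) : WithTop ℤ) ≤ v W.a₆

namespace IsIStarOddNormalForm

variable {v : AddValuation R (WithTop ℤ)} {k : ℤ} {W : WeierstrassCurve R} {x y : R}

theorem one_le_val_two (hW : IsIStarOddNormalForm v k W) : ((1 : ℤ) : WithTop ℤ) ≤ v 2 :=
  WithTop.coe_add_one_le_of_lt hW.val_two_pos

theorem two_le_val_four (hW : IsIStarOddNormalForm v k W) : ((2 : ℤ) : WithTop ℤ) ≤ v 4 := by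
  rw [show (4 : R) = 2 ^ 2 by norm_num]
  exact v.coe_le_map_pow 2 hW.one_le_val_two (by norm_num)

theorem val_three (hW : IsIStarOddNormalForm v k W) : v 3 = ((0 : ℤ) : WithTop ℤ) := by
  rw [show (3 : R) = 1 + 2 by norm_num]
  exact v.map_add_eq_of_add_one_le v.map_one hW.one_le_val_two

theorem two_le_val_b₂ (hW : IsIStarOddNormalForm v k W) : ((2 : ℤ) : WithTop ℤ) ≤ v W.b₂ :=
  v.map_le_add (v.coe_le_map_pow 2 hW.val_a₁ (by norm_num))
    (v.coe_le_map_mul hW.two_le_val_four hW.val_a₂.ge (by norm_num))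

theorem le_val_b₄ (hW : IsIStarOddNormalForm v k W) : ((k + 2 : ℤ) : WithTop ℤ) ≤ v W.b₄ :=
  v.map_le_add (v.coe_le_map_mul hW.one_le_val_two hW.val_a₄ (by omega))
    (v.coe_le_map_mul hW.val_a₁ hW.val_a₃.ge (by omega))

theorem val_b₆ (hW : IsIStarOddNormalForm v k W) : v W.b₆ = ((2 * k + 2 : ℤ) : WithTop ℤ) :=
  v.map_add_eq_of_add_one_le (v.map_pow_eq_coe 2 hW.val_a₃ (by push_cast; ring))
    (v.coe_le_map_mul hW.two_le_val_four hW.val_a₆ (by omega))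

theorem val_b₈ (hW : IsIStarOddNormalForm v k W) : v W.b₈ = ((2 * k + 3 : ℤ) : WithTop ℤ) := by
  have hb₈ : W.b₈ = W.a₂ * W.a₃ ^ 2 +
      (W.a₁ ^ 2 * W.a₆ + 4 * W.a₂ * W.a₆ - W.a₁ * W.a₃ * W.a₄ - W.a₄ ^ 2) := by
    rw [WeierstrassCurve.b₈]; ring
  rw [hb₈]
  refine v.map_add_eq_of_add_one_le (v.map_mul_eq_coe hW.val_a₂
    (v.map_pow_eq_coe 2 hW.val_a₃ rfl) (by push_cast; ring)) ?_
  refine v.map_le_sub (v.map_le_sub (v.map_le_add ?_ ?_) ?_) ?_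
  · exact v.coe_le_map_mul (v.coe_le_map_pow 2 hW.val_a₁ le_rfl) hW.val_a₆ (by omega)
  · exact v.coe_le_map_mul (v.coe_le_map_mul hW.two_le_val_four hW.val_a₂.ge le_rfl)
      hW.val_a₆ (by omega)
  · exact v.coe_le_map_mul (v.coe_le_map_mul hW.val_a₁ hW.val_a₃.ge le_rfl) hW.val_a₄
      (by omega)
  · exact v.coe_le_map_pow 2 hW.val_a₄ (by omega)

theorem val_eval_Φ_two_of_val_eq_one
    (hW : IsIStarOddNormalForm v k W) (hx : v x = ((1 : ℤ) : WithTop ℤ)) :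
    v ((W.Φ 2).eval x) = ((4 : ℤ) : WithTop ℤ) := by
  have hk := hW.one_le
  rw [eval_Φ_two, show x ^ 4 - W.b₄ * x ^ 2 - 2 * W.b₆ * x - W.b₈ =
    x ^ 4 - (W.b₄ * x ^ 2 + 2 * W.b₆ * x + W.b₈) by ring]
  refine v.map_sub_eq_of_add_one_le (v.map_pow_eq_coe 4 hx rfl)
    (v.map_le_add (v.map_le_add ?_ ?_) ?_)
  · exact v.coe_le_map_mul hW.le_val_b₄ (v.coe_le_map_pow 2 hx.ge le_rfl) (by omega)
  · exact v.coe_le_map_mul (v.coe_le_map_mul hW.one_le_val_two hW.val_b₆.ge le_rfl) hx.ge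
      (by omega)
  · exact (WithTop.coe_le_coe.2 (by omega)).trans hW.val_b₈.ge

theorem val_eval_Ψ₃_of_val_eq_one
    (hW : IsIStarOddNormalForm v k W) (hx : v x = ((1 : ℤ) : WithTop ℤ)) :
    v (W.Ψ₃.eval x) = ((4 : ℤ) : WithTop ℤ) := by
  have hk := hW.one_le
  rw [eval_Ψ₃, show 3 * x ^ 4 + W.b₂ * x ^ 3 + 3 * W.b₄ * x ^ 2 + 3 * W.b₆ * x + W.b₈ =
    3 * x ^ 4 + (W.b₂ * x ^ 3 + 3 * W.b₄ * x ^ 2 + 3 * W.b₆ * x + W.b₈) by ring]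
  refine v.map_add_eq_of_add_one_le (v.map_mul_eq_coe hW.val_three
    (v.map_pow_eq_coe 4 hx rfl) rfl) (v.map_le_add (v.map_le_add (v.map_le_add ?_ ?_) ?_) ?_)
  · exact v.coe_le_map_mul hW.two_le_val_b₂ (v.coe_le_map_pow 3 hx.ge le_rfl) (by omega)
  · exact v.coe_le_map_mul (v.coe_le_map_mul hW.val_three.ge hW.le_val_b₄ le_rfl)
      (v.coe_le_map_pow 2 hx.ge le_rfl) (by omega)
  · exact v.coe_le_map_mul (v.coe_le_map_mul hW.val_three.ge hW.val_b₆.ge le_rfl) hx.ge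
      (by omega)
  · exact (WithTop.coe_le_coe.2 (by omega)).trans hW.val_b₈.ge

theorem four_le_val_eval_Ψ₂Sq_of_val_eq_one
    (hW : IsIStarOddNormalForm v k W) (hx : v x = ((1 : ℤ) : WithTop ℤ)) :
    ((4 : ℤ) : WithTop ℤ) ≤ v (W.Ψ₂Sq.eval x) := by
  have hk := hW.one_le
  rw [eval_Ψ₂Sq]
  refine v.map_le_add (v.map_le_add (v.map_le_add ?_ ?_) ?_) ?_
  · exact v.coe_le_map_mul hW.two_le_val_four (v.coe_le_map_pow 3 hx.ge le_rfl) (by omega)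
  · exact v.coe_le_map_mul hW.two_le_val_b₂ (v.coe_le_map_pow 2 hx.ge le_rfl) (by omega)
  · exact v.coe_le_map_mul (v.coe_le_map_mul hW.one_le_val_two hW.le_val_b₄ le_rfl) hx.ge
      (by omega)
  · exact (WithTop.coe_le_coe.2 (by omega)).trans hW.val_b₆.ge

theorem val_eval_Φ_two_of_le_val
    (hW : IsIStarOddNormalForm v k W) (hx : ((k + 1 : ℤ) : WithTop ℤ) ≤ v x) :
    v ((W.Φ 2).eval x) = ((2 * k + 3 : ℤ) : WithTop ℤ) := by
  have hk := hW.one_le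
  rw [eval_Φ_two, show x ^ 4 - W.b₄ * x ^ 2 - 2 * W.b₆ * x - W.b₈ =
    -(W.b₈ - (x ^ 4 - W.b₄ * x ^ 2 - 2 * W.b₆ * x)) by ring, v.map_neg]
  refine v.map_sub_eq_of_add_one_le hW.val_b₈ (v.map_le_sub (v.map_le_sub ?_ ?_) ?_)
  · exact v.coe_le_map_pow 4 hx (by omega)
  · exact v.coe_le_map_mul hW.le_val_b₄ (v.coe_le_map_pow 2 hx le_rfl) (by omega)
  · exact v.coe_le_map_mul (v.coe_le_map_mul hW.one_le_val_two hW.val_b₆.ge le_rfl) hx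
      (by omega)

theorem val_eval_Ψ₃_of_le_val
    (hW : IsIStarOddNormalForm v k W) (hx : ((k + 1 : ℤ) : WithTop ℤ) ≤ v x) :
    v (W.Ψ₃.eval x) = ((2 * k + 3 : ℤ) : WithTop ℤ) := by
  have hk := hW.one_le
  rw [eval_Ψ₃, show 3 * x ^ 4 + W.b₂ * x ^ 3 + 3 * W.b₄ * x ^ 2 + 3 * W.b₆ * x + W.b₈ =
    W.b₈ + (3 * x ^ 4 + W.b₂ * x ^ 3 + 3 * W.b₄ * x ^ 2 + 3 * W.b₆ * x) by ring]
  refine v.map_add_eq_of_add_one_le hW.val_b₈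
    (v.map_le_add (v.map_le_add (v.map_le_add ?_ ?_) ?_) ?_)
  · exact v.coe_le_map_mul hW.val_three.ge (v.coe_le_map_pow 4 hx le_rfl) (by omega)
  · exact v.coe_le_map_mul hW.two_le_val_b₂ (v.coe_le_map_pow 3 hx le_rfl) (by omega)
  · exact v.coe_le_map_mul (v.coe_le_map_mul hW.val_three.ge hW.le_val_b₄ le_rfl)
      (v.coe_le_map_pow 2 hx le_rfl) (by omega)
  · exact v.coe_le_map_mul (v.coe_le_map_mul hW.val_three.ge hW.val_b₆.ge le_rfl) hx
      (by omega)

theorem val_eval_Ψ₂Sq_of_le_val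
    (hW : IsIStarOddNormalForm v k W) (hx : ((k + 1 : ℤ) : WithTop ℤ) ≤ v x) :
    v (W.Ψ₂Sq.eval x) = ((2 * k + 2 : ℤ) : WithTop ℤ) := by
  have hk := hW.one_le
  rw [eval_Ψ₂Sq, show 4 * x ^ 3 + W.b₂ * x ^ 2 + 2 * W.b₄ * x + W.b₆ =
    W.b₆ + (4 * x ^ 3 + W.b₂ * x ^ 2 + 2 * W.b₄ * x) by ring]
  refine v.map_add_eq_of_add_one_le hW.val_b₆ (v.map_le_add (v.map_le_add ?_ ?_) ?_)
  · exact v.coe_le_map_mul hW.two_le_val_four (v.coe_le_map_pow 3 hx le_rfl) (by omega)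
  · exact v.coe_le_map_mul hW.two_le_val_b₂ (v.coe_le_map_pow 2 hx le_rfl) (by omega)
  · exact v.coe_le_map_mul (v.coe_le_map_mul hW.one_le_val_two hW.le_val_b₄ le_rfl) hx
      (by omega)

theorem val_weierstrass_rhs (hW : IsIStarOddNormalForm v k W) {n : ℤ} (hx : v x = n)
    (hn : 1 < n) (hnk : n ≤ k) :
    v (x ^ 3 + W.a₂ * x ^ 2 + W.a₄ * x + W.a₆) = ((2 * n + 1 : ℤ) : WithTop ℤ) := by
  rw [show x ^ 3 + W.a₂ * x ^ 2 + W.a₄ * x + W.a₆ = W.a₂ * x ^ 2 + (x ^ 3 + W.a₄ * x + W.a₆) by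
    ring]
  refine v.map_add_eq_of_add_one_le (v.map_mul_eq_coe hW.val_a₂ (v.map_pow_eq_coe 2 hx rfl)
    (by push_cast; ring)) (v.map_le_add (v.map_le_add ?_ ?_) ?_)
  · exact v.coe_le_map_pow 3 hx.ge (by omega)
  · exact v.coe_le_map_mul hW.val_a₄ hx.ge (by omega)
  · exact (WithTop.coe_le_coe.2 (by omega)).trans hW.val_a₆

theorem val_weierstrass_lhs_ne (hW : IsIStarOddNormalForm v k W) {n : ℤ} (hx : v x = n)
    (hnk : n ≤ k) : v (y ^ 2 + W.a₁ * x * y + W.a₃ * y) ≠ ((2 * n + 1 : ℤ) : WithTop ℤ) := by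
  rcases le_or_gt (v y) (n : WithTop ℤ) with hyn | hyn
  · obtain ⟨m, hm⟩ := WithTop.ne_top_iff_exists.1 (ne_top_of_le_ne_top WithTop.coe_ne_top hyn)
    have hmn : m ≤ n := WithTop.coe_le_coe.1 (hm ▸ hyn)
    rw [add_assoc, v.map_add_eq_of_add_one_le (v.map_pow_eq_coe 2 hm.symm rfl)
      (v.map_le_add ?_ ?_), Ne, WithTop.coe_inj]
    · omega -- parity
    · exact v.coe_le_map_mul (v.coe_le_map_mul hW.val_a₁ hx.ge le_rfl) hm.le (by omega)
    · exact v.coe_le_map_mul hW.val_a₃.ge hm.le (by omega)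
  · have hy := WithTop.coe_add_one_le_of_lt hyn
    refine ne_of_gt ((WithTop.coe_lt_coe.2 (lt_add_one _)).trans_le ?_)
    refine v.map_le_add (v.map_le_add ?_ ?_) ?_
    · exact v.coe_le_map_pow 2 hy (by omega)
    · exact v.coe_le_map_mul (v.coe_le_map_mul hW.val_a₁ hx.ge le_rfl) hy (by omega)
    · exact v.coe_le_map_mul hW.val_a₃.ge hy (by omega)

theorem not_equation_of_one_lt_val_of_val_lt (hW : IsIStarOddNormalForm v k W) (h₁ : 1 < v x)
    (h₂ : v x < ((k + 1 : ℤ) : WithTop ℤ)) : ¬ W.toAffine.Equation x y := by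
  obtain ⟨n, hn⟩ := WithTop.ne_top_iff_exists.1 h₂.ne_top
  rw [← hn] at h₁ h₂
  have hn₁ : 1 < n := by exact_mod_cast h₁
  have hnk : n < k + 1 := WithTop.coe_lt_coe.1 h₂
  rw [Affine.equation_iff]
  intro h
  exact hW.val_weierstrass_lhs_ne hn.symm (by omega)
    (h ▸ hW.val_weierstrass_rhs hn.symm hn₁ (by omega))

end IsIStarOddNormalForm

end WeierstrassCurve

theorem greatest_common_valuation_stmt_7_general {K : Type*} [Field K]
    (v : K → WithTop ℤ)
    (hv_top : ∀ z : K, v z = ⊤ ↔ z = 0)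
    (hv_mul : ∀ z w : K, v (z * w) = v z + v w)
    (hv_add : ∀ z w : K, min (v z) (v w) ≤ v (z + w))
    (hv2 : 0 < v (2 : K))
    (k : ℤ) (hk : 1 ≤ k)
    (W : WeierstrassCurve K)
    (ha₁ : 1 ≤ v W.a₁) (ha₂ : v W.a₂ = 1)
    (ha₃ : v W.a₃ = ((k + 1 : ℤ) : WithTop ℤ))
    (ha₄ : ((k + 2 : ℤ) : WithTop ℤ) ≤ v W.a₄)
    (ha₆ : ((2 * k + 2 : ℤ) : WithTop ℤ) ≤ v W.a₆)
    (x y : K) (hP : W.toAffine.Equation x y) :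
    (v x = 1 →
      v ((W.Φ 2).eval x) = ((4 : ℤ) : WithTop ℤ) ∧
      v (W.Ψ₃.eval x) = ((4 : ℤ) : WithTop ℤ) ∧
      ((4 : ℤ) : WithTop ℤ) ≤ v (W.Ψ₂Sq.eval x)) ∧
    (0 < v y → ¬ (1 < v x ∧ v x < ((k + 1 : ℤ) : WithTop ℤ))) ∧
    (((k + 1 : ℤ) : WithTop ℤ) ≤ v x →
      v ((W.Φ 2).eval x) = ((2 * k + 3 : ℤ) : WithTop ℤ) ∧
      v (W.Ψ₃.eval x) = ((2 * k + 3 : ℤ) : WithTop ℤ) ∧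
      v (W.Ψ₂Sq.eval x) = ((2 * k + 2 : ℤ) : WithTop ℤ)) := by
  let w : AddValuation K (WithTop ℤ) := AddValuation.of v ((hv_top 0).2 rfl)
    (map_one_eq_zero_of_map_mul ((hv_top 1).not.2 one_ne_zero) hv_mul) hv_add hv_mul
  have hW : W.IsIStarOddNormalForm w k := ⟨hv2, hk, ha₁, ha₂, ha₃, ha₄, ha₆⟩
  refine ⟨fun hx => ⟨?_, ?_, ?_⟩, fun _ hx => hW.not_equation_of_one_lt_val_of_val_lt hx.1 hx.2 hP,
    fun hx => ⟨?_, ?_, ?_⟩⟩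
  · exact hW.val_eval_Φ_two_of_val_eq_one hx
  · exact hW.val_eval_Ψ₃_of_val_eq_one hx
  · exact hW.four_le_val_eval_Ψ₂Sq_of_val_eq_one hx
  · exact hW.val_eval_Φ_two_of_le_val hx
  · exact hW.val_eval_Ψ₃_of_le_val hx
  · exact hW.val_eval_Ψ₂Sq_of_le_val hx

/-- (Kodaira type `I_m^*`, `m = 2k − 1` odd, residue characteristic `2`.)
Let `K` be a field with a normalised discrete valuation `v` with uniformiser `π`, suppose
`v(2) > 0`, and let `k ≥ 1`.  Let `E/K` be a Weierstrass curve with `v(a₁) ≥ 1`, `v(a₂) = 1`,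
`v(a₃) = k + 1`, `v(a₄) ≥ k + 2` and `v(a₆) ≥ 2k + 2`.  Let `P = (x, y)` be a point on `E`
with `v(x) > 0` satisfying the Weierstrass equation.  Then:
(a) if `v(x) = 1`, then `v(φ₂(P)) = v(ψ₃(P)) = 4` and `v(ψ₂²(P)) ≥ 4`;
(b) the range `1 < v(x) < k + 1` is impossible for a point with `v(y) > 0`;
(c) if `v(x) ≥ k + 1`, then `v(φ₂(P)) = v(ψ₃(P)) = 2k + 3` and `v(ψ₂²(P)) = 2k + 2`. -/
theorem greatest_common_valuation_stmt_7 {K : Type*} [Field K]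
    (v : K → WithTop ℤ)
    (hv_top : ∀ z : K, v z = ⊤ ↔ z = 0)
    (hv_mul : ∀ z w : K, v (z * w) = v z + v w)
    (hv_add : ∀ z w : K, min (v z) (v w) ≤ v (z + w))
    (π : K) (hπ : v π = 1)
    (hv2 : 0 < v (2 : K))
    (k : ℤ) (hk : 1 ≤ k)
    (W : WeierstrassCurve K)
    (ha₁ : 1 ≤ v W.a₁) (ha₂ : v W.a₂ = 1)
    (ha₃ : v W.a₃ = ((k + 1 : ℤ) : WithTop ℤ))
    (ha₄ : ((k + 2 : ℤ) : WithTop ℤ) ≤ v W.a₄)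
    (ha₆ : ((2 * k + 2 : ℤ) : WithTop ℤ) ≤ v W.a₆)
    (x y : K) (hP : W.toAffine.Equation x y) (hx : 0 < v x) :
    (v x = 1 →
      v ((W.Φ 2).eval x) = ((4 : ℤ) : WithTop ℤ) ∧
      v (W.Ψ₃.eval x) = ((4 : ℤ) : WithTop ℤ) ∧
      ((4 : ℤ) : WithTop ℤ) ≤ v (W.Ψ₂Sq.eval x)) ∧
    (0 < v y → ¬ (1 < v x ∧ v x < ((k + 1 : ℤ) : WithTop ℤ))) ∧
    (((k + 1 : ℤ) : WithTop ℤ) ≤ v x →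
      v ((W.Φ 2).eval x) = ((2 * k + 3 : ℤ) : WithTop ℤ) ∧
      v (W.Ψ₃.eval x) = ((2 * k + 3 : ℤ) : WithTop ℤ) ∧
      v (W.Ψ₂Sq.eval x) = ((2 * k + 2 : ℤ) : WithTop ℤ)) :=
  greatest_common_valuation_stmt_7_general v hv_top hv_mul hv_add hv2 k hk W ha₁ ha₂ ha₃ ha₄ ha₆ x y
    hP
end
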